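/- Let f be a transcendental entire function and suppose there exist α > 1 and r₀ > 0 such that for every r ≥ r₀ there exists σ with r ≤ σ ≤ r^α and L(σ,f) = M(r,f). Define R_{n+1} = M(R_n^{1/(2α)}, f) with R₁ sufficiently large, and set t_n = (1/(2α))·R_n^{1/(2α)}·log R_n. Then for each sufficiently large n there exists σ_n with t_n ≤ σ_n ≤ t_n^α such that L(σ_n, f) = M(t_n, f) ≥ t_{n+1}^α; in particular σ_n → ∞ and liminf_{n→∞} L(σ_n, f) = ∞. -/

import Mathlib

/-!
By the maximum principle `M(·, f)` is nondecreasing. For `t(x) = (1/(2α)) x^{1/(2α)} log x` and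
`log x ≥ 2α` we have `x^{1/(2α)} ≤ t(x)`, and also `t(x)^α ≤ x`, because
`α log t(x) = log x / 2 + α log y` with `y = log x / (2α)` and `log y ≤ y`.
Hence, for large `n`,
`t_{n+1}^α ≤ R_{n+1} = M(R_n^{1/(2α)}, f) ≤ M(t_n, f)`.
Since `t_n → ∞`, the hypothesis at `r = t_n` gives `σ_n ∈ [t_n, t_n^α]` with
`L(σ_n, f) = M(t_n, f) ≥ R_{n+1} → ∞`.
-/

open Filter MeasureTheory Topology

/-- The maximum modulus `M(r, f) = max {|f z| : |z| = r}`. -/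
noncomputable def maxMod (f : ℂ → ℂ) (r : ℝ) : ℝ :=
  sSup ((fun z => ‖f z‖) '' Metric.sphere (0 : ℂ) r)

/-- The minimum modulus `L(r, f) = min {|f z| : |z| = r}`. -/
noncomputable def minMod (f : ℂ → ℂ) (r : ℝ) : ℝ :=
  sInf ((fun z => ‖f z‖) '' Metric.sphere (0 : ℂ) r)

/-- A transcendental entire function: entire and not a polynomial. -/
def TranscendentalEntire (f : ℂ → ℂ) : Prop :=
  Differentiable ℂ f ∧ ¬ ∃ p : Polynomial ℂ, ∀ z, f z = p.eval z

lemma maxMod_bddAbove {f : ℂ → ℂ} (hf : Continuous f) (r : ℝ) :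
    BddAbove ((fun z => ‖f z‖) '' Metric.sphere (0 : ℂ) r) :=
  ((isCompact_sphere 0 r).image (continuous_norm.comp hf)).bddAbove

lemma norm_le_maxMod {f : ℂ → ℂ} (hf : Continuous f) {r : ℝ} {z : ℂ}
    (hz : z ∈ Metric.sphere (0 : ℂ) r) : ‖f z‖ ≤ maxMod f r :=
  le_csSup (maxMod_bddAbove hf r) ⟨z, hz, rfl⟩

lemma maxMod_nonneg {f : ℂ → ℂ} (hf : Continuous f) {r : ℝ} (hr : 0 ≤ r) :
    0 ≤ maxMod f r :=
  (norm_nonneg _).trans (norm_le_maxMod hf (z := (r : ℂ)) (by simp [abs_of_nonneg hr]))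

lemma maxMod_mono {f : ℂ → ℂ} (hf : Differentiable ℂ f) {r s : ℝ}
    (hr : 0 ≤ r) (hrs : r ≤ s) : maxMod f r ≤ maxMod f s := by
  rcases (hr.trans hrs).eq_or_lt with hs | hs
  · rw [le_antisymm hrs (hs ▸ hr)]
  refine Real.sSup_le ?_ (maxMod_nonneg hf.continuous hs.le)
  rintro _ ⟨z, hz, rfl⟩
  have hz_mem : z ∈ closure (Metric.ball (0 : ℂ) s) := by
    rw [closure_ball (0 : ℂ) hs.ne', Metric.mem_closedBall]
    rw [Metric.mem_sphere] at hz
    exact hz.le.trans hrs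
  refine Complex.norm_le_of_forall_mem_frontier_norm_le Metric.isBounded_ball
    hf.diffContOnCl (fun w hw => ?_) hz_mem
  rw [frontier_ball (0 : ℂ) hs.ne'] at hw
  exact norm_le_maxMod hf.continuous hw

/-- The paper's `t_n` is `rootLog α R_n`. -/
noncomputable def rootLog (α x : ℝ) : ℝ :=
  (1 / (2 * α)) * x ^ (1 / (2 * α)) * Real.log x

section rootLog

variable {α x : ℝ}

lemma tendsto_rootLog_atTop (hα : 0 < α) : Tendsto (rootLog α) atTop atTop := by
  have hc : (0 : ℝ) < 1 / (2 * α) := by positivity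
  convert ((tendsto_rpow_atTop hc).atTop_mul_atTop₀ Real.tendsto_log_atTop).const_mul_atTop hc
    using 1
  funext x
  rw [rootLog, mul_assoc]

lemma rpow_le_rootLog (hα : 0 < α) (hx : Real.exp (2 * α) ≤ x) :
    x ^ (1 / (2 * α)) ≤ rootLog α x := by
  have hx0 : 0 < x := (Real.exp_pos _).trans_le hx
  have hlog : 1 ≤ 1 / (2 * α) * Real.log x := by
    rw [one_div, inv_mul_eq_div, le_div_iff₀ (by positivity)]
    linarith [(Real.le_log_iff_exp_le hx0).2 hx]
  calc x ^ (1 / (2 * α)) = x ^ (1 / (2 * α)) * 1 := (mul_one _).symm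
    _ ≤ x ^ (1 / (2 * α)) * (1 / (2 * α) * Real.log x) :=
        mul_le_mul_of_nonneg_left hlog (Real.rpow_nonneg hx0.le _)
    _ = rootLog α x := by rw [rootLog]; ring

lemma rootLog_rpow_le (hα : 0 < α) (hx : Real.exp (2 * α) ≤ x) : rootLog α x ^ α ≤ x := by
  have hx0 : 0 < x := (Real.exp_pos _).trans_le hx
  set y := Real.log x
  have hy : 0 < y := by linarith [(Real.le_log_iff_exp_le hx0).2 hx]
  have ht : 0 < rootLog α x := by unfold rootLog; positivity
  have hlog_t : α * Real.log (rootLog α x) = y / 2 + α * Real.log (y / (2 * α)) := by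
    rw [rootLog, Real.log_mul (by positivity) hy.ne', Real.log_mul (by positivity)
      (Real.rpow_pos_of_pos hx0 _).ne', Real.log_rpow hx0, Real.log_div hy.ne' (by positivity),
      one_div, Real.log_inv]
    field_simp
    ring
  have hlog_y : α * Real.log (y / (2 * α)) ≤ y / 2 := by
    calc α * Real.log (y / (2 * α)) ≤ α * (y / (2 * α)) :=
          mul_le_mul_of_nonneg_left (Real.log_le_self (by positivity)) hα.le
      _ = y / 2 := by field_simp
  calc rootLog α x ^ α = Real.exp (Real.log (rootLog α x) * α) := Real.rpow_def_of_pos ht α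
    _ ≤ Real.exp y := Real.exp_le_exp.mpr (by linarith)
    _ = x := Real.exp_log hx0

lemma maxMod_rpow_le_maxMod_rootLog {f : ℂ → ℂ} (hf : Differentiable ℂ f) (hα : 0 < α)
    (hx : Real.exp (2 * α) ≤ x) : maxMod f (x ^ (1 / (2 * α))) ≤ maxMod f (rootLog α x) :=
  maxMod_mono hf (Real.rpow_nonneg ((Real.exp_pos _).le.trans hx) _) (rpow_le_rootLog hα hx)

end rootLog

lemma exists_seq_minMod_eq_maxMod {f : ℂ → ℂ} {α r₀ : ℝ}
    (hstep : ∀ r ≥ r₀, ∃ σ : ℝ, r ≤ σ ∧ σ ≤ r ^ α ∧ minMod f σ = maxMod f r) (t : ℕ → ℝ) :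
    ∃ σ : ℕ → ℝ, (∀ n, t n ≤ σ n) ∧
      ∀ n, r₀ ≤ t n → σ n ≤ t n ^ α ∧ minMod f (σ n) = maxMod f (t n) := by
  have hex : ∀ n, ∃ s : ℝ, t n ≤ s ∧
      (r₀ ≤ t n → s ≤ t n ^ α ∧ minMod f s = maxMod f (t n)) := by
    intro n
    by_cases h : r₀ ≤ t n
    · obtain ⟨s, hts, hst, hL⟩ := hstep (t n) h
      exact ⟨s, hts, fun _ => ⟨hst, hL⟩⟩
    · exact ⟨t n, le_rfl, fun h' => absurd h' h⟩
  choose σ hσ_ge hσ using hex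
  exact ⟨σ, hσ_ge, hσ⟩

theorem exists_sigma_sequence_general (f : ℂ → ℂ) (hf : TranscendentalEntire f)
    (α r₀ : ℝ) (hα : 1 < α)
    (hstep1 : ∀ r ≥ r₀, ∃ σ : ℝ, r ≤ σ ∧ σ ≤ r ^ α ∧ minMod f σ = maxMod f r)
    (R : ℕ → ℝ)
    (hRrec : ∀ n : ℕ, R (n + 1) = maxMod f ((R n) ^ (1 / (2 * α))))
    (hRtend : Tendsto R atTop atTop) :
    ∃ σ : ℕ → ℝ,
      (∀ᶠ n : ℕ in atTop,
        (1 / (2 * α)) * (R n) ^ (1 / (2 * α)) * Real.log (R n) ≤ σ n ∧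
        σ n ≤ ((1 / (2 * α)) * (R n) ^ (1 / (2 * α)) * Real.log (R n)) ^ α ∧
        minMod f (σ n) = maxMod f ((1 / (2 * α)) * (R n) ^ (1 / (2 * α)) * Real.log (R n)) ∧
        ((1 / (2 * α)) * (R (n + 1)) ^ (1 / (2 * α)) * Real.log (R (n + 1))) ^ α ≤
          maxMod f ((1 / (2 * α)) * (R n) ^ (1 / (2 * α)) * Real.log (R n))) ∧
      Tendsto σ atTop atTop ∧
      Filter.liminf (fun n : ℕ => ((minMod f (σ n) : ℝ) : EReal)) atTop = ⊤ := by
  have hα₀ : 0 < α := by linarith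
  set t := fun n => rootLog α (R n)
  have ht : Tendsto t atTop atTop := (tendsto_rootLog_atTop hα₀).comp hRtend
  have hRsucc : Tendsto (fun n => R (n + 1)) atTop atTop := hRtend.comp (tendsto_add_atTop_nat 1)
  obtain ⟨σ, hσ_ge, hσ⟩ := exists_seq_minMod_eq_maxMod hstep1 t
  have hσ_ev : ∀ᶠ n in atTop, σ n ≤ t n ^ α ∧ minMod f (σ n) = maxMod f (t n) :=
    (ht.eventually_ge_atTop r₀).mono hσ
  have hnext : ∀ᶠ n in atTop, t (n + 1) ^ α ≤ R (n + 1) :=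
    (hRsucc.eventually_ge_atTop _).mono fun n => rootLog_rpow_le hα₀
  have hgrowth : ∀ᶠ n in atTop, R (n + 1) ≤ maxMod f (t n) :=
    (hRtend.eventually_ge_atTop _).mono fun n hn => (hRrec n).trans_le (maxMod_rpow_le_maxMod_rootLog hf.1 hα₀ hn)
  have hL : Tendsto (fun n => minMod f (σ n)) atTop atTop :=
    tendsto_atTop_mono' atTop ((hσ_ev.and hgrowth).mono fun n h => h.2.trans_eq h.1.2.symm)
      hRsucc
  refine ⟨σ, ?_, tendsto_atTop_mono hσ_ge ht, (EReal.tendsto_coe_atTop.comp hL).liminf_eq⟩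
  filter_upwards [hσ_ev, hnext, hgrowth] with n hσn hnext_n hgrowth_n
  exact ⟨hσ_ge n, hσn.1, hσn.2, hnext_n.trans hgrowth_n⟩

/-- Step 3 of the proof: with `t_n = (1/(2α)) R_n^{1/(2α)} log R_n`, for each sufficiently
large `n` there is `σ_n ∈ [t_n, t_n^α]` with `L(σ_n,f) = M(t_n,f) ≥ t_{n+1}^α`; in
particular `σ_n → ∞` and `liminf_{n→∞} L(σ_n,f) = ∞`. -/
theorem exists_sigma_sequence (f : ℂ → ℂ) (hf : TranscendentalEntire f)
    (α r₀ : ℝ) (hα : 1 < α) (hr₀ : 0 < r₀)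
    (hstep1 : ∀ r ≥ r₀, ∃ σ : ℝ, r ≤ σ ∧ σ ≤ r ^ α ∧ minMod f σ = maxMod f r)
    (R : ℕ → ℝ)
    (hRrec : ∀ n : ℕ, R (n + 1) = maxMod f ((R n) ^ (1 / (2 * α))))
    (hR₀ : 3 ≤ R 0) (hRtend : Tendsto R atTop atTop) :
    ∃ σ : ℕ → ℝ,
      (∀ᶠ n : ℕ in atTop,
        (1 / (2 * α)) * (R n) ^ (1 / (2 * α)) * Real.log (R n) ≤ σ n ∧
        σ n ≤ ((1 / (2 * α)) * (R n) ^ (1 / (2 * α)) * Real.log (R n)) ^ α ∧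
        minMod f (σ n) = maxMod f ((1 / (2 * α)) * (R n) ^ (1 / (2 * α)) * Real.log (R n)) ∧
        ((1 / (2 * α)) * (R (n + 1)) ^ (1 / (2 * α)) * Real.log (R (n + 1))) ^ α ≤
          maxMod f ((1 / (2 * α)) * (R n) ^ (1 / (2 * α)) * Real.log (R n))) ∧
      Tendsto σ atTop atTop ∧
      Filter.liminf (fun n : ℕ => ((minMod f (σ n) : ℝ) : EReal)) atTop = ⊤ :=
  exists_sigma_sequence_general f hf α r₀ hα hstep1 R hRrec hRtend
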